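/- Let ρ be a Borel probability measure on SL_d(ℝ) with an exponential moment, i.e. ∫‖g‖^ε dρ(g) < ∞ for some ε > 0. Then for any t₁, t₂ > 0 there exist n₀ ∈ ℕ and t₃ > 0 such that for all n ≥ n₀, ρ^{*n}({g : ρ^{*n}(B(g, e^{−t₂ n})) ≥ e^{−t₃ n}}) ≥ 1 − e^{−t₁ n}. -/

import Mathlib

noncomputable section

open MeasureTheory
open scoped ENNReal

/-- `n`-fold convolution power `ρ^{*n}` of a measure on a monoid (`ρ^{*0} = δ_1`). -/
def convPow {G : Type*} [Monoid G] [MeasurableSpace G] (ρ : Measure G) : ℕ → Measure G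
  | 0 => Measure.dirac 1
  | n + 1 => (convPow ρ n).mconv ρ

/-- The operator norm of a `d × d` real matrix acting on Euclidean space. -/
def mnorm {d : ℕ} (g : Matrix (Fin d) (Fin d) ℝ) : ℝ :=
  ‖Matrix.toEuclideanCLM (𝕜 := ℝ) g‖

/-- The ball of radius `r` around `g` for the operator-norm metric. -/
def mball {d : ℕ} (g : Matrix (Fin d) (Fin d) ℝ) (r : ℝ) :
    Set (Matrix (Fin d) (Fin d) ℝ) :=
  {h | mnorm (h - g) < r}

instance matMeasurableSpace {d : ℕ} : MeasurableSpace (Matrix (Fin d) (Fin d) ℝ) :=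
  MeasurableSpace.pi (m := fun _ : Fin d => MeasurableSpace.pi)

/-!
Submultiplicativity of the operator norm gives `∫ ‖g‖^ε dρ^{*n} ≤ (∫ ‖g‖^ε dρ)^n`, so by Markov's
inequality `ρ^{*n}(‖g‖ ≥ e^{Mn}) ≤ e^{-2t₁n}` once `M` is large. Cover `{‖g‖ ≤ e^{Mn}}` by
`C e^{(M+t₂)d²n}` balls of radius `e^{-t₂n}/2`. If such a small ball contains a point `g` with
`ρ^{*n}(B(g, e^{-t₂n})) < e^{-t₃n}`, it lies inside `B(g, e^{-t₂n})`, so these points carry mass at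
most `C e^{((M+t₂)d² - t₃)n}` inside `{‖g‖ ≤ e^{Mn}}`. With `t₃ = (M+t₂)d² + 2t₁` both contributions
are `O(e^{-2t₁n})`, hence at most `e^{-t₁n}` for large `n`.
-/

open Metric Finset

section ConvolutionPower

variable {G : Type*} [Monoid G] [MeasurableSpace G] [MeasurableMul₂ G]

instance isProbabilityMeasure_convPow (ρ : Measure G) [IsProbabilityMeasure ρ] (n : ℕ) :
    IsProbabilityMeasure (convPow ρ n) := by
  induction n with
  | zero => rw [convPow]; infer_instance
  | succ n ih => rw [convPow]; exact Measure.probabilitymeasure_of_probabilitymeasures_mconv _ _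

theorem lintegral_convPow_le_pow (ρ : Measure G) [SFinite ρ] {f : G → ℝ≥0∞}
    (hf : Measurable f) (hf_one : f 1 ≤ 1) (hf_mul : ∀ x y, f (x * y) ≤ f x * f y) (n : ℕ) :
    ∫⁻ g, f g ∂(convPow ρ n) ≤ (∫⁻ g, f g ∂ρ) ^ n := by
  induction n with
  | zero => simpa [convPow, lintegral_dirac' _ hf] using hf_one
  | succ n ih =>
    calc ∫⁻ g, f g ∂(convPow ρ (n + 1))
        = ∫⁻ x, ∫⁻ y, f (x * y) ∂ρ ∂(convPow ρ n) := Measure.lintegral_mconv hf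
      _ ≤ ∫⁻ x, ∫⁻ y, f x * f y ∂ρ ∂(convPow ρ n) :=
          lintegral_mono fun x => lintegral_mono fun y => hf_mul x y
      _ = (∫⁻ x, f x ∂(convPow ρ n)) * ∫⁻ y, f y ∂ρ := by
          simp_rw [lintegral_const_mul _ hf, lintegral_mul_const _ hf]
      _ ≤ (∫⁻ g, f g ∂ρ) ^ (n + 1) := by
          rw [pow_succ]; gcongr

end ConvolutionPower

section NormTail

variable {A : Type*} [NormedRing A] [MeasurableSpace A] [OpensMeasurableSpace A] [MeasurableMul₂ A]

theorem measure_convPow_le_norm_le (hA : ‖(1 : A)‖ ≤ 1) (ρ : Measure A) [SFinite ρ]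
    {ε R : ℝ} (hε : 0 ≤ ε) (hR : 0 < R) (n : ℕ) :
    convPow ρ n {g | R ≤ ‖g‖} ≤
      (∫⁻ g, ENNReal.ofReal (‖g‖ ^ ε) ∂ρ) ^ n / ENNReal.ofReal (R ^ ε) := by
  have hf : Measurable fun g : A => ENNReal.ofReal (‖g‖ ^ ε) := by fun_prop
  have hRε : ENNReal.ofReal (R ^ ε) ≠ 0 := by simpa using Real.rpow_pos_of_pos hR ε
  calc convPow ρ n {g | R ≤ ‖g‖}
      ≤ convPow ρ n {g | ENNReal.ofReal (R ^ ε) ≤ ENNReal.ofReal (‖g‖ ^ ε)} :=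
        measure_mono fun g hg => ENNReal.ofReal_le_ofReal (Real.rpow_le_rpow hR.le hg hε)
    _ ≤ (∫⁻ g, ENNReal.ofReal (‖g‖ ^ ε) ∂(convPow ρ n)) / ENNReal.ofReal (R ^ ε) :=
        meas_ge_le_lintegral_div hf.aemeasurable hRε ENNReal.ofReal_ne_top
    _ ≤ (∫⁻ g, ENNReal.ofReal (‖g‖ ^ ε) ∂ρ) ^ n / ENNReal.ofReal (R ^ ε) := by
        gcongr
        refine lintegral_convPow_le_pow ρ hf ?_ (fun x y => ?_) n
        · exact ENNReal.ofReal_le_one.2 (Real.rpow_le_one (norm_nonneg _) hA hε)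
        · rw [← ENNReal.ofReal_mul (by positivity), ← Real.mul_rpow (norm_nonneg _) (norm_nonneg _)]
          exact ENNReal.ofReal_le_ofReal (Real.rpow_le_rpow (norm_nonneg _) (norm_mul_le x y) hε)

theorem exists_forall_measure_convPow_exp_le_norm_le (hA : ‖(1 : A)‖ ≤ 1) (ρ : Measure A)
    [SFinite ρ] {ε : ℝ} (hε : 0 < ε) (hmom : ∫⁻ g, ENNReal.ofReal (‖g‖ ^ ε) ∂ρ < ⊤)
    {τ : ℝ} (hτ : 0 ≤ τ) :
    ∃ M : ℝ, 0 ≤ M ∧ ∀ n : ℕ,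
      convPow ρ n {g | Real.exp (M * n) ≤ ‖g‖} ≤ ENNReal.ofReal (Real.exp (-τ * n)) := by
  set I := ∫⁻ g, ENNReal.ofReal (‖g‖ ^ ε) ∂ρ
  set M := (I.toReal + τ) / ε
  have hM : I ≤ ENNReal.ofReal (Real.exp (ε * M - τ)) := by
    rw [mul_div_cancel₀ _ hε.ne', add_sub_cancel_right]
    calc I = ENNReal.ofReal I.toReal := (ENNReal.ofReal_toReal hmom.ne).symm
      _ ≤ _ := ENNReal.ofReal_le_ofReal
        ((le_add_of_nonneg_right zero_le_one).trans (Real.add_one_le_exp _))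
  refine ⟨M, by positivity, fun n => ?_⟩
  calc convPow ρ n {g | Real.exp (M * n) ≤ ‖g‖}
      ≤ I ^ n / ENNReal.ofReal (Real.exp (M * n) ^ ε) :=
        measure_convPow_le_norm_le hA ρ hε.le (Real.exp_pos _) n
    _ ≤ ENNReal.ofReal (Real.exp (ε * M - τ)) ^ n / ENNReal.ofReal (Real.exp (M * n) ^ ε) := by
        gcongr
    _ = ENNReal.ofReal (Real.exp (-τ * n)) := by
        rw [← ENNReal.ofReal_pow (Real.exp_pos _).le, ← ENNReal.ofReal_div_of_pos (by positivity),
          ← Real.exp_nat_mul, ← Real.exp_mul, ← Real.exp_sub]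
        ring_nf

end NormTail

section Covering

theorem floor_div_mem_Icc_ceil {R s y : ℝ} (hs : 0 < s) (hy : |y| ≤ R) :
    ⌊y / s⌋ ∈ Icc (-⌈R / s⌉) ⌈R / s⌉ := by
  rw [abs_le] at hy
  refine mem_Icc.2 ⟨?_, ?_⟩
  · rw [← Int.floor_neg, ← neg_div]
    exact Int.floor_mono (div_le_div_of_nonneg_right hy.1 hs.le)
  · exact (Int.floor_mono (div_le_div_of_nonneg_right hy.2 hs.le)).trans (Int.floor_le_ceil _)

theorem abs_sub_floor_div_mul_lt (y : ℝ) {s : ℝ} (hs : 0 < s) : |y - ⌊y / s⌋ * s| < s :=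
  abs_lt.2 ⟨by linarith [Int.sub_floor_div_mul_nonneg y hs], Int.sub_floor_div_mul_lt y hs⟩

theorem exists_finset_card_le_closedBall_subset_pi (ι : Type*) [Fintype ι] {R s : ℝ}
    (hR : 0 ≤ R) (hs : 0 < s) :
    ∃ F : Finset (ι → ℝ), (#F : ℝ) ≤ (2 * R / s + 3) ^ Fintype.card ι ∧
      closedBall 0 R ⊆ ⋃ x ∈ F, ball x s := by
  classical
  set K := ⌈R / s⌉
  set T : Finset ℝ := (Icc (-K) K).image fun k : ℤ => k * s
  have hT : (#T : ℝ) ≤ 2 * R / s + 3 := by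
    have hK : (0 : ℤ) ≤ K := Int.ceil_nonneg (div_nonneg hR hs.le)
    have hIcc : (#(Icc (-K) K) : ℝ) = 2 * K + 1 := by
      rw [Int.card_Icc, show K + 1 - -K = 2 * K + 1 by ring]
      exact_mod_cast Int.toNat_of_nonneg (by omega)
    have hT_le : (#T : ℝ) ≤ #(Icc (-K) K) := by exact_mod_cast card_image_le
    have hK_lt : (K : ℝ) < R / s + 1 := Int.ceil_lt_add_one _
    rw [mul_div_assoc]
    linarith
  refine ⟨Fintype.piFinset fun _ => T, ?_, fun y hy => ?_⟩
  · rw [Fintype.card_piFinset, prod_const, card_univ]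
    push_cast
    exact pow_le_pow_left₀ (Nat.cast_nonneg _) hT _
  · have hyi : ∀ i, |y i| ≤ R := fun i =>
      (norm_le_pi_norm y i).trans (mem_closedBall_zero_iff.1 hy)
    refine Set.mem_iUnion₂.2 ⟨fun i => ⌊y i / s⌋ * s, Fintype.mem_piFinset.2 fun i =>
      mem_image_of_mem _ (floor_div_mem_Icc_ceil hs (hyi i)), ?_⟩
    rw [mem_ball, dist_eq_norm, pi_norm_lt_iff hs]
    exact fun i => abs_sub_floor_div_mul_lt (y i) hs

theorem exists_finset_card_le_closedBall_subset (E : Type*) [NormedAddCommGroup E]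
    [NormedSpace ℝ E] [FiniteDimensional ℝ E] :
    ∃ C : ℝ, 0 ≤ C ∧ ∀ {R r : ℝ}, 0 < r → r ≤ R → ∃ F : Finset E,
      (#F : ℝ) ≤ C * (R / r) ^ Module.finrank ℝ E ∧ closedBall 0 R ⊆ ⋃ x ∈ F, ball x r := by
  classical
  set e := (Module.finBasis ℝ E).equivFun.toContinuousLinearEquiv
  set a := ‖e.toContinuousLinearMap‖
  set b := ‖e.symm.toContinuousLinearMap‖ + 1
  have ha : 0 ≤ a := norm_nonneg _
  have hb : 1 ≤ b := le_add_of_nonneg_left (norm_nonneg _)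
  refine ⟨(2 * a * b + 3) ^ Module.finrank ℝ E, by positivity, fun {R r} hr hrR => ?_⟩
  have hR : 0 ≤ R := hr.le.trans hrR
  obtain ⟨F, hF_card, hF_cover⟩ := exists_finset_card_le_closedBall_subset_pi
    (Fin (Module.finrank ℝ E)) (mul_nonneg ha hR) (div_pos hr (by linarith : (0 : ℝ) < b))
  refine ⟨F.image e.symm, ?_, fun y hy => ?_⟩
  · rw [← mul_pow]
    rw [Fintype.card_fin] at hF_card
    refine (Nat.cast_le.2 card_image_le).trans
      (hF_card.trans (pow_le_pow_left₀ (by positivity) ?_ _))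
    have h1 : 1 ≤ R / r := (one_le_div hr).2 hrR
    rw [div_div_eq_mul_div, show 2 * (a * R) * b / r = 2 * a * b * (R / r) by ring]
    nlinarith
  · have hey : e y ∈ closedBall 0 (a * R) := by
      rw [mem_closedBall_zero_iff] at hy ⊢
      exact e.toContinuousLinearMap.le_opNorm_of_le hy
    obtain ⟨x, hxF, hx⟩ := Set.mem_iUnion₂.1 (hF_cover hey)
    refine Set.mem_iUnion₂.2 ⟨e.symm x, mem_image_of_mem _ hxF, ?_⟩
    rw [mem_ball, dist_eq_norm] at hx ⊢
    calc ‖y - e.symm x‖ = ‖e.symm.toContinuousLinearMap (e y - x)‖ := by simp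
      _ ≤ (b - 1) * ‖e y - x‖ := by simpa [b] using e.symm.toContinuousLinearMap.le_opNorm (e y - x)
      _ ≤ b * ‖e y - x‖ := by nlinarith [norm_nonneg (e y - x)]
      _ < b * (r / b) := by gcongr
      _ = r := by field_simp

end Covering

section SmallBalls

theorem measure_setOf_measure_ball_lt_le {X : Type*} [PseudoMetricSpace X]
    [MeasurableSpace X] (μ : Measure X) {K : Set X} {F : Finset X} {r : ℝ}
    (hK : K ⊆ ⋃ x ∈ F, ball x (r / 2)) (δ : ℝ≥0∞) :
    μ {g | μ (ball g r) < δ} ≤ μ Kᶜ + #F * δ := by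
  set B := {g | μ (ball g r) < δ}
  have hsub : B ⊆ Kᶜ ∪ ⋃ x ∈ F, ball x (r / 2) ∩ B := by
    intro g hg
    by_cases hgK : g ∈ K
    · obtain ⟨x, hxF, hgx⟩ := Set.mem_iUnion₂.1 (hK hgK)
      exact Or.inr (Set.mem_iUnion₂.2 ⟨x, hxF, hgx, hg⟩)
    · exact Or.inl hgK
  have hpiece : ∀ x ∈ F, μ (ball x (r / 2) ∩ B) ≤ δ := by
    intro x _
    rcases Set.eq_empty_or_nonempty (ball x (r / 2) ∩ B) with h | ⟨g, hgx, hg⟩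
    · simp [h]
    · have : ball x (r / 2) ⊆ ball g r :=
        ball_subset_ball' (by rw [dist_comm]; linarith [mem_ball.1 hgx])
      exact (measure_mono (Set.inter_subset_left.trans this)).trans hg.le
  calc μ B ≤ μ Kᶜ + μ (⋃ x ∈ F, ball x (r / 2) ∩ B) :=
        (measure_mono hsub).trans (measure_union_le _ _)
    _ ≤ μ Kᶜ + ∑ x ∈ F, μ (ball x (r / 2) ∩ B) := by
        gcongr; exact measure_biUnion_finset_le F _
    _ ≤ μ Kᶜ + #F * δ := by gcongr; simpa using sum_le_card_nsmul F _ δ hpiece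

theorem exists_measure_setOf_measure_ball_lt_le (E : Type*) [NormedAddCommGroup E]
    [NormedSpace ℝ E] [FiniteDimensional ℝ E] [MeasurableSpace E] :
    ∃ C : ℝ, 0 ≤ C ∧ ∀ (μ : Measure E) {R r : ℝ} (δ : ℝ≥0∞), 0 < r → r ≤ 2 * R →
      μ {g | μ (ball g r) < δ} ≤
        μ {g | R ≤ ‖g‖} + ENNReal.ofReal (C * (R / r) ^ Module.finrank ℝ E) * δ := by
  obtain ⟨C, hC0, hC⟩ := exists_finset_card_le_closedBall_subset E
  refine ⟨C * 2 ^ Module.finrank ℝ E, by positivity, fun μ R r δ hr hrR => ?_⟩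
  obtain ⟨F, hF_card, hF_cover⟩ := hC (R := R) (half_pos hr) (by linarith)
  refine (measure_setOf_measure_ball_lt_le μ hF_cover δ).trans ?_
  gcongr
  · exact fun g hg => (lt_of_not_ge (mem_closedBall_zero_iff.not.1 hg)).le
  · rw [← ENNReal.ofReal_natCast]
    exact ENNReal.ofReal_le_ofReal (hF_card.trans_eq (by ring))

theorem exists_measure_setOf_measure_ball_exp_lt_le (E : Type*) [NormedAddCommGroup E]
    [NormedSpace ℝ E] [FiniteDimensional ℝ E] [MeasurableSpace E] :
    ∃ C : ℝ, ∀ (μ : Measure E) {M t τ : ℝ} (n : ℕ), 0 ≤ M → 0 ≤ t →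
      μ {g | Real.exp (M * n) ≤ ‖g‖} ≤ ENNReal.ofReal (Real.exp (-τ * n)) →
      μ {g | μ (ball g (Real.exp (-t * n))) <
          ENNReal.ofReal (Real.exp (-((M + t) * Module.finrank ℝ E + τ) * n))} ≤
        ENNReal.ofReal ((1 + C) * Real.exp (-τ * n)) := by
  obtain ⟨C, hC0, hsmall⟩ := exists_measure_setOf_measure_ball_lt_le E
  refine ⟨C, fun μ M t τ n hM ht htail => ?_⟩
  have hrR : Real.exp (-t * n) ≤ 2 * Real.exp (M * n) := by
    have : Real.exp (-t * n) ≤ Real.exp (M * n) := Real.exp_le_exp.2 (by nlinarith)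
    linarith [Real.exp_pos (M * n)]
  have hcount : C * (Real.exp (M * n) / Real.exp (-t * n)) ^ Module.finrank ℝ E *
      Real.exp (-((M + t) * Module.finrank ℝ E + τ) * n) = C * Real.exp (-τ * n) := by
    rw [← Real.exp_sub, ← Real.exp_nat_mul, mul_assoc, ← Real.exp_add]
    ring_nf
  calc _ ≤ _ := hsmall μ _ (Real.exp_pos _) hrR
    _ ≤ ENNReal.ofReal (Real.exp (-τ * n)) + ENNReal.ofReal (C * Real.exp (-τ * n)) := by
        rw [← ENNReal.ofReal_mul (by positivity), hcount]
        gcongr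
    _ = ENNReal.ofReal ((1 + C) * Real.exp (-τ * n)) := by
        rw [← ENNReal.ofReal_add (by positivity) (by positivity)]
        ring_nf

theorem ofReal_one_sub_le_measure_compl {X : Type*} [MeasurableSpace X] {μ : Measure X}
    [IsProbabilityMeasure μ] {s : Set X} {p : ℝ} (hp : 0 ≤ p) (hs : μ s ≤ ENNReal.ofReal p) :
    ENNReal.ofReal (1 - p) ≤ μ sᶜ := by
  rw [ENNReal.ofReal_sub _ hp, ENNReal.ofReal_one, tsub_le_iff_right, ← measure_univ (μ := μ)]
  exact (measure_univ_le_add_compl s).trans (by rw [add_comm]; gcongr)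

end SmallBalls

open scoped Matrix.Norms.L2Operator

namespace Matrix

variable {d : ℕ}

instance borelSpace_fin : BorelSpace (Matrix (Fin d) (Fin d) ℝ) :=
  inferInstanceAs <| BorelSpace (Fin d → Fin d → ℝ)

theorem mnorm_eq_norm (g : Matrix (Fin d) (Fin d) ℝ) : mnorm g = ‖g‖ := rfl

theorem mball_eq_ball (g : Matrix (Fin d) (Fin d) ℝ) (r : ℝ) : mball g r = ball g r := by
  ext h
  rw [mball, Set.mem_ofPred_eq, mnorm_eq_norm, mem_ball, dist_eq_norm]

theorem l2_opNorm_one_le : ‖(1 : Matrix (Fin d) (Fin d) ℝ)‖ ≤ 1 := by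
  rw [← mnorm_eq_norm, mnorm, map_one]
  exact ContinuousLinearMap.norm_id_le

end Matrix

theorem stmt12_general {d : ℕ} (ρ : Measure (Matrix (Fin d) (Fin d) ℝ)) [IsProbabilityMeasure ρ]
    (ε : ℝ) (hε : 0 < ε)
    (hmom : ∫⁻ g, ENNReal.ofReal (mnorm g ^ ε) ∂ρ < ⊤)
    (t₁ t₂ : ℝ) (ht₁ : 0 < t₁) (ht₂ : 0 < t₂) :
    ∃ (n₀ : ℕ) (t₃ : ℝ), 0 < t₃ ∧ ∀ n : ℕ, n₀ ≤ n →
      ENNReal.ofReal (1 - Real.exp (-t₁ * n)) ≤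
        convPow ρ n {g | ENNReal.ofReal (Real.exp (-t₃ * n)) ≤
          convPow ρ n (mball g (Real.exp (-t₂ * n)))} := by
  obtain ⟨M, hM0, htail⟩ := exists_forall_measure_convPow_exp_le_norm_le Matrix.l2_opNorm_one_le
    ρ hε hmom (τ := 2 * t₁) (by positivity)
  obtain ⟨C, hsmall⟩ := exists_measure_setOf_measure_ball_exp_lt_le (Matrix (Fin d) (Fin d) ℝ)
  set D := Module.finrank ℝ (Matrix (Fin d) (Fin d) ℝ)
  obtain ⟨n₀, hn₀⟩ := Filter.eventually_atTop.1 <| (Real.tendsto_exp_atTop.comp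
    (tendsto_natCast_atTop_atTop.const_mul_atTop ht₁)).eventually_ge_atTop (1 + C)
  refine ⟨n₀, (M + t₂) * D + 2 * t₁, by positivity, fun n hn => ?_⟩
  have hgood : {g | ENNReal.ofReal (Real.exp (-((M + t₂) * D + 2 * t₁) * n)) ≤
      convPow ρ n (mball g (Real.exp (-t₂ * n)))} = {g | convPow ρ n (ball g (Real.exp (-t₂ * n)))
        < ENNReal.ofReal (Real.exp (-((M + t₂) * D + 2 * t₁) * n))}ᶜ := by
    ext g
    simp [Matrix.mball_eq_ball]
  rw [hgood]
  refine ofReal_one_sub_le_measure_compl (Real.exp_pos _).le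
    ((hsmall _ n hM0 ht₂.le (htail n)).trans (ENNReal.ofReal_le_ofReal ?_))
  calc (1 + C) * Real.exp (-(2 * t₁) * n) ≤ Real.exp (t₁ * n) * Real.exp (-(2 * t₁) * n) := by
        gcongr; exact hn₀ n hn
    _ = Real.exp (-t₁ * n) := by rw [← Real.exp_add]; ring_nf

/-- Let `ρ` be a Borel probability measure on `SL_d(ℝ)` with an exponential moment
(`∫ ‖g‖^ε dρ < ∞` for some `ε > 0`). Then for any `t₁, t₂ > 0` there are `n₀ ∈ ℕ` and
`t₃ > 0` such that for all `n ≥ n₀`,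
`ρ^{*n}({g : ρ^{*n}(B(g, e^{-t₂n})) ≥ e^{-t₃n}}) ≥ 1 - e^{-t₁n}`. -/
theorem stmt12 {d : ℕ} (ρ : Measure (Matrix (Fin d) (Fin d) ℝ)) [IsProbabilityMeasure ρ]
    (hSL : ρ {g | g.det = 1} = 1)
    (ε : ℝ) (hε : 0 < ε)
    (hmom : ∫⁻ g, ENNReal.ofReal (mnorm g ^ ε) ∂ρ < ⊤)
    (t₁ t₂ : ℝ) (ht₁ : 0 < t₁) (ht₂ : 0 < t₂) :
    ∃ (n₀ : ℕ) (t₃ : ℝ), 0 < t₃ ∧ ∀ n : ℕ, n₀ ≤ n →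
      ENNReal.ofReal (1 - Real.exp (-t₁ * n)) ≤
        convPow ρ n {g | ENNReal.ofReal (Real.exp (-t₃ * n)) ≤
          convPow ρ n (mball g (Real.exp (-t₂ * n)))} :=
  stmt12_general ρ ε hε hmom t₁ t₂ ht₁ ht₂
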